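/- arXiv:1404.0139 — 2 statements merged into one kernel-verified Lean document; each statement's English description precedes it below -/
import Mathlib

section
/- Let Y : [0,∞) → ℝ^N be a solution of the rescaled gradient flow Y' = −∇E^resc(Y) satisfying conditions (R1)–(R6) with constant A for an inner set I = [l, l+k−1]. Then: (i) Y_i'(τ) → 0 as τ → ∞ for every i ∈ I; (ii) E^resc_k(Y(τ)) converges to a limit e_∞ as τ → ∞; (iii) ∇E^resc_k((Y_i(τ))_{i∈I}) → 0 as τ → ∞. -/
/-!
Along the flow, `d/dτ E^resc_k(Y) = -∇E^resc_k · ∇E^resc = -|∇E^resc_k|² + O(e^{-ατ})`: by (R5) the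
full gradient differs from the local one only through the interactions with the outer particles,
which are `O(e^{-ατ})`. Hence `Φ = E^resc_k + (c/α) e^{-ατ}` is nonincreasing, and by (R2), (R6) it
is bounded below, so it converges, which gives (ii). On the same bounded, separated region the
dissipation `|∇E^resc_k|²` is Lipschitz in time, so Barbalat's lemma gives (iii); finally
`Y_i' = -∇_i E^resc = -∇_i E^resc_k + O(e^{-ατ}) → 0`, which is (i).
-/

open Filter

noncomputable section

/-- `h_N = 1/(N+1)`. -/
def hN (N : ℕ) : ℝ := 1 / (N + 1)

/-- Right-hand side of the discrete Keller–Segel particle ODE, with the convention that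
the boundary terms `1/(X_1 - X_0)` and `1/(X_{N+1} - X_N)` are set to zero. -/
def ksRHS (N : ℕ) (χ : ℝ) (x : ℕ → ℝ) (i : ℕ) : ℝ :=
  (if i < N then -(1 / (x (i + 1) - x i)) else 0)
    + (if 1 < i then 1 / (x i - x (i - 1)) else 0)
    + 2 * χ * hN N * ∑ j ∈ (Finset.Icc 1 N).erase i, 1 / (x j - x i)

/-- A solution of the discrete Keller–Segel particle system on `[0,T)`. -/
structure IsKSSol (N : ℕ) (χ T : ℝ) (X : ℕ → ℝ → ℝ) : Prop where
  ordered : ∀ t ∈ Set.Ico (0 : ℝ) T, ∀ i, 1 ≤ i → i < N → X i t < X (i + 1) t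
  ode : ∀ i ∈ Finset.Icc 1 N, ∀ t ∈ Set.Ico (0 : ℝ) T,
    HasDerivAt (X i) (ksRHS N χ (fun j => X j t) i) t

/-- A solution on its maximal interval of existence `[0,T)`: it cannot be extended to a
solution on any larger interval `[0,T')`. -/
def IsMaxKSSol (N : ℕ) (χ T : ℝ) (X : ℕ → ℝ → ℝ) : Prop :=
  IsKSSol N χ T X ∧
    ∀ T' > T, ∀ X' : ℕ → ℝ → ℝ,
      (∀ i ∈ Finset.Icc 1 N, ∀ t ∈ Set.Ico (0 : ℝ) T, X' i t = X i t) →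
        ¬ IsKSSol N χ T' X'

/-- `liminf_{t → T⁻} (X_{i+1}(t) - X_i(t)) = 0`. -/
def gapLiminfZero (X : ℕ → ℝ → ℝ) (T : ℝ) (i : ℕ) : Prop :=
  Filter.liminf (fun t => X (i + 1) t - X i t) (nhdsWithin T (Set.Iio T)) = 0

/-- A nonempty set of consecutive indices in `{1,…,N}` all of whose consecutive gaps have
liminf zero at time `T`. -/
def IsWeakCand (N : ℕ) (X : ℕ → ℝ → ℝ) (T : ℝ) (I : Finset ℕ) : Prop :=
  I.Nonempty ∧ (∃ a b, 1 ≤ a ∧ b ≤ N ∧ I = Finset.Icc a b) ∧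
    ∀ i, i ∈ I → i + 1 ∈ I → gapLiminfZero X T i

/-- A weak blow-up set: maximal for inclusion among weak candidates. -/
def IsWeakBlowup (N : ℕ) (X : ℕ → ℝ → ℝ) (T : ℝ) (I : Finset ℕ) : Prop :=
  IsWeakCand N X T I ∧ ∀ J, IsWeakCand N X T J → I ⊆ J → J = I

/-- A strong blow-up set: all consecutive gaps tend to zero, and the particles of `I` stay
uniformly away from the particles outside `I`. -/
def IsStrongBlowup (N : ℕ) (X : ℕ → ℝ → ℝ) (T : ℝ) (I : Finset ℕ) : Prop :=
  IsWeakBlowup N X T I ∧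
    (∀ i, i ∈ I → i + 1 ∈ I →
      Filter.Tendsto (fun t => X (i + 1) t - X i t) (nhdsWithin T (Set.Iio T)) (nhds 0)) ∧
    ∃ c > 0, ∀ i ∈ I, ∀ j ∈ Finset.Icc 1 N, j ∉ I → ∀ t ∈ Set.Ico (0 : ℝ) T,
      1 / c ≤ |X i t - X j t|

/-- Mean of the configuration `x` over the index set `I`. -/
def meanOn (I : Finset ℕ) (x : ℕ → ℝ) : ℝ := (∑ i ∈ I, x i) / (I.card : ℝ)

/-- Variance `Π²_I` of the configuration `x` over the index set `I`. -/
def var2 (I : Finset ℕ) (x : ℕ → ℝ) : ℝ := ∑ i ∈ I, (x i - meanOn I x) ^ 2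

/-- Exterior interaction potential `H_{IO,m} = ∑_{j∈O} ∑_{i∈I} 1/(x_j - x_i)^m`,
where `O = {1,…,N} \ I`. -/
def extPot (N : ℕ) (I : Finset ℕ) (m : ℕ) (x : ℕ → ℝ) : ℝ :=
  ∑ j ∈ (Finset.Icc 1 N) \ I, ∑ i ∈ I, 1 / (x j - x i) ^ m

/-- Gradient of the rescaled energy
`E^resc(Y) = -∑ log(Y_{i+1}-Y_i) + χ h_N ∑_{i≠j} log|Y_i-Y_j| - (α/2)|Y|²`
with respect to `Y_i`, with the boundary conventions. -/
def gradResc (N : ℕ) (χ α : ℝ) (y : ℕ → ℝ) (i : ℕ) : ℝ :=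
  (if i < N then 1 / (y (i + 1) - y i) else 0)
    - (if 1 < i then 1 / (y i - y (i - 1)) else 0)
    - 2 * χ * hN N * ∑ j ∈ (Finset.Icc 1 N).erase i, 1 / (y j - y i)
    - α * y i

/-- Gradient of the local rescaled energy `E^resc_k`, restricted to the inner set
`I = [l, l+k-1]`, with respect to `Y_i` for `i ∈ I`. -/
def gradRescK (N : ℕ) (χ α : ℝ) (l k : ℕ) (y : ℕ → ℝ) (i : ℕ) : ℝ :=
  (if i < l + k - 1 then 1 / (y (i + 1) - y i) else 0)
    - (if l < i then 1 / (y i - y (i - 1)) else 0)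
    - 2 * χ * hN N * ∑ j ∈ (Finset.Icc l (l + k - 1)).erase i, 1 / (y j - y i)
    - α * y i

/-- The local rescaled energy
`E^resc_k(Y) = -∑_{i=l}^{l+k-2} log(Y_{i+1}-Y_i) + χ h_N ∑_{i≠j∈I} log|Y_i-Y_j|
  - (α/2) ∑_{i∈I} Y_i²` for the inner set `I = [l, l+k-1]`. -/
def ErescK (N : ℕ) (χ α : ℝ) (l k : ℕ) (y : ℕ → ℝ) : ℝ :=
  -∑ i ∈ Finset.Icc l (l + k - 2), Real.log (y (i + 1) - y i)
    + χ * hN N * ∑ i ∈ Finset.Icc l (l + k - 1),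
        ∑ j ∈ (Finset.Icc l (l + k - 1)).erase i, Real.log |y i - y j|
    - α / 2 * ∑ i ∈ Finset.Icc l (l + k - 1), (y i) ^ 2

/-- A solution of the rescaled gradient flow `Y' = -∇E^resc(Y)` defined for all `τ ≥ 0`
with ordered particles (condition (R1)). -/
structure IsRescSol (N : ℕ) (χ α : ℝ) (Y : ℕ → ℝ → ℝ) : Prop where
  ordered : ∀ τ : ℝ, 0 ≤ τ → ∀ i, 1 ≤ i → i < N → Y i τ < Y (i + 1) τ
  ode : ∀ i ∈ Finset.Icc 1 N, ∀ τ : ℝ, 0 ≤ τ →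
    HasDerivAt (Y i) (-(gradResc N χ α (fun j => Y j τ) i)) τ

open Finset Topology

theorem sub_le_mul_sub_of_hasDerivAt_le {f f' : ℝ → ℝ} {a b C : ℝ} (hab : a ≤ b)
    (hf : ∀ x ∈ Set.Icc a b, HasDerivAt f (f' x) x) (hC : ∀ x ∈ Set.Icc a b, f' x ≤ C) :
    f b - f a ≤ C * (b - a) :=
  (convex_Icc a b).image_sub_le_mul_sub_of_deriv_le
    (fun x hx => (hf x hx).continuousAt.continuousWithinAt)
    (fun x hx => (hf x (interior_subset hx)).differentiableAt.differentiableWithinAt)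
    (fun x hx => (hf x (interior_subset hx)).deriv ▸ hC x (interior_subset hx))
    a (Set.left_mem_Icc.2 hab) b (Set.right_mem_Icc.2 hab) hab

theorem exists_tendsto_of_hasDerivAt_nonpos {Φ Φ' : ℝ → ℝ} {m : ℝ}
    (hΦ : ∀ τ, 0 ≤ τ → HasDerivAt Φ (Φ' τ) τ) (hΦ' : ∀ τ, 0 ≤ τ → Φ' τ ≤ 0)
    (hm : ∀ τ, 0 ≤ τ → m ≤ Φ τ) : ∃ e, Tendsto Φ atTop (𝓝 e) := by
  have hanti : Antitone fun τ => Φ (max τ 0) := fun a b hab => by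
    have hmax := le_max_right a 0
    have := sub_le_mul_sub_of_hasDerivAt_le (max_le_max_right 0 hab)
      (fun x hx => hΦ x (hmax.trans hx.1)) (fun x hx => hΦ' x (hmax.trans hx.1))
    simp only [zero_mul, sub_nonpos] at this
    exact this
  refine ⟨_, (tendsto_atTop_ciInf hanti ⟨m, ?_⟩).congr' ?_⟩
  · rintro _ ⟨τ, rfl⟩
    exact hm _ (le_max_right τ 0)
  · filter_upwards [eventually_ge_atTop 0] with τ hτ
    rw [max_eq_left hτ]

/-- Barbalat's lemma. -/
theorem tendsto_zero_of_hasDerivAt_le_neg {Φ Φ' G : ℝ → ℝ} {e : ℝ}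
    (hΦ : ∀ τ, 0 ≤ τ → HasDerivAt Φ (Φ' τ) τ) (hΦ' : ∀ τ, 0 ≤ τ → Φ' τ ≤ -G τ)
    (hlim : Tendsto Φ atTop (𝓝 e)) (hG : ∀ τ, 0 ≤ τ → 0 ≤ G τ)
    (hGuc : UniformContinuousOn G (Set.Ici 0)) : Tendsto G atTop (𝓝 0) := by
  refine tendsto_order.2 ⟨fun a ha => ?_, fun ε hε => ?_⟩
  · filter_upwards [eventually_ge_atTop 0] with τ hτ using ha.trans_le (hG τ hτ)
  obtain ⟨δ, hδ, hGδ⟩ := Metric.uniformContinuousOn_iff.1 hGuc (ε / 2) (half_pos hε)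
  have hstep : Tendsto (fun τ => Φ (τ + δ / 2) - Φ τ) atTop (𝓝 0) := by
    simpa using (hlim.comp (tendsto_atTop_add_const_right _ _ tendsto_id)).sub hlim
  filter_upwards [eventually_ge_atTop 0,
    hstep.eventually (lt_mem_nhds (neg_neg_of_pos (by positivity : 0 < ε / 2 * (δ / 2))))]
    with τ hτ hτstep
  by_contra! hGτ
  -- `G ≥ ε / 2` on `[τ, τ + δ / 2]`, so `Φ` drops there by at least `ε δ / 4`
  have hdrop := sub_le_mul_sub_of_hasDerivAt_le (f := Φ) (C := -(ε / 2))
    (by linarith : τ ≤ τ + δ / 2) (fun x hx => hΦ x (hτ.trans hx.1)) fun x hx => by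
      have hx0 := hτ.trans hx.1
      have hdist := hGδ x hx0 τ hτ <| by
        rw [Real.dist_eq, abs_lt]
        constructor <;> linarith [hx.1, hx.2]
      rw [Real.dist_eq, abs_lt] at hdist
      linarith [hΦ' x hx0]
  linarith

theorem abs_one_div_le_of_one_div_le_abs {x A : ℝ} (hA : 0 < A) (hx : 1 / A ≤ |x|) :
    |1 / x| ≤ A := by
  rw [abs_div, abs_one]
  exact (one_div_le hA ((one_div_pos.2 hA).trans_le hx)).1 hx

theorem abs_one_div_sub_one_div_le {x y m : ℝ} (hm : 0 < m) (hx : m ≤ |x|) (hy : m ≤ |y|) :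
    |1 / x - 1 / y| ≤ |x - y| / m ^ 2 := by
  have hx0 : 0 < |x| := hm.trans_le hx
  have hy0 : 0 < |y| := hm.trans_le hy
  rw [div_sub_div _ _ (abs_pos.1 hx0) (abs_pos.1 hy0), abs_div, abs_mul, one_mul, mul_one,
    abs_sub_comm]
  exact div_le_div_of_nonneg_left (abs_nonneg _) (by positivity)
    (by rw [sq]; exact mul_le_mul hx hy hm.le hx0.le)

theorem abs_sq_sub_sq_le {a b B : ℝ} (ha : |a| ≤ B) (hb : |b| ≤ B) :
    |a ^ 2 - b ^ 2| ≤ 2 * B * |a - b| := by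
  rw [sq_sub_sq, abs_mul]
  gcongr
  linarith [abs_add_le a b]

theorem one_div_sq_le_extPot {N : ℕ} {I : Finset ℕ} {y : ℕ → ℝ} {i j : ℕ} (hi : i ∈ I)
    (hj : j ∈ Icc 1 N \ I) : 1 / (y j - y i) ^ 2 ≤ extPot N I 2 y := by
  unfold extPot
  exact (single_le_sum (f := fun i => 1 / (y j - y i) ^ 2) (fun _ _ => by positivity) hi).trans
    (single_le_sum (f := fun j => ∑ i ∈ I, 1 / (y j - y i) ^ 2)
      (fun _ _ => sum_nonneg fun _ _ => by positivity) hj)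

theorem gradRescK_zero (N : ℕ) (χ α : ℝ) (l k i : ℕ) : gradRescK N χ α l k 0 i = 0 := by
  simp [gradRescK]

theorem abs_gradRescK_sub_le {N l k i : ℕ} {χ α D : ℝ} {y z : ℕ → ℝ} (hχ : 0 ≤ χ) (hα : 0 ≤ α)
    (hD0 : 0 ≤ D) (hi : i ∈ Icc l (l + k - 1))
    (hD : ∀ a ∈ Icc l (l + k - 1), ∀ b ∈ Icc l (l + k - 1), a ≠ b →
      |1 / (y a - y b) - 1 / (z a - z b)| ≤ D) :
    |gradRescK N χ α l k y i - gradRescK N χ α l k z i|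
      ≤ (2 + 2 * χ * hN N * k) * D + α * |y i - z i| := by
  set r : ℕ → ℕ → ℝ := fun a b => 1 / (y a - y b) - 1 / (z a - z b)
  have hi' := mem_Icc.1 hi
  have hup : |if i < l + k - 1 then r (i + 1) i else 0| ≤ D := by
    split_ifs
    · exact hD _ (mem_Icc.2 (by omega)) _ hi (by omega)
    · simpa using hD0
  have hdown : |if l < i then r i (i - 1) else 0| ≤ D := by
    split_ifs
    · exact hD _ hi _ (mem_Icc.2 (by omega)) (by omega)
    · simpa using hD0
  have hsum : |∑ j ∈ (Icc l (l + k - 1)).erase i, r j i| ≤ k * D :=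
    calc _ ≤ ∑ j ∈ (Icc l (l + k - 1)).erase i, |r j i| := abs_sum_le_sum_abs _ _
      _ ≤ #((Icc l (l + k - 1)).erase i) • D := sum_le_card_nsmul _ _ _ fun j hj =>
          hD _ (mem_of_mem_erase hj) _ hi (ne_of_mem_erase hj)
      _ ≤ k * D := by
          rw [nsmul_eq_mul]
          gcongr
          have : #((Icc l (l + k - 1)).erase i) ≤ k := by
            rw [card_erase_of_mem hi, Nat.card_Icc]
            omega
          exact_mod_cast this
  have hc : 0 ≤ 2 * χ * hN N := by unfold hN; positivity
  have hinter : |2 * χ * hN N * ∑ j ∈ (Icc l (l + k - 1)).erase i, r j i|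
      ≤ 2 * χ * hN N * (k * D) := by
    rw [abs_mul, abs_of_nonneg hc]
    gcongr
  have hconf : |α * (y i - z i)| = α * |y i - z i| := by rw [abs_mul, abs_of_nonneg hα]
  have hdiff : gradRescK N χ α l k y i - gradRescK N χ α l k z i
      = (if i < l + k - 1 then r (i + 1) i else 0) - (if l < i then r i (i - 1) else 0)
        - 2 * χ * hN N * ∑ j ∈ (Icc l (l + k - 1)).erase i, r j i - α * (y i - z i) := by
    simp only [gradRescK, r, sum_sub_distrib]
    split_ifs <;> ring
  rw [hdiff]
  have := abs_le.1 hup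
  have := abs_le.1 hdown
  have := abs_le.1 hinter
  have := abs_le.1 hconf.le
  exact abs_le.2 ⟨by linarith, by linarith⟩

theorem abs_gradResc_sub_gradRescK_le {N l k i : ℕ} {χ α ε : ℝ} {y : ℕ → ℝ} (hχ : 0 ≤ χ)
    (hε0 : 0 ≤ ε) (hl : 1 ≤ l) (hlk : l + k - 1 ≤ N) (hi : i ∈ Icc l (l + k - 1))
    (hε : ∀ j ∈ Icc 1 N \ Icc l (l + k - 1), |1 / (y j - y i)| ≤ ε) :
    |gradResc N χ α y i - gradRescK N χ α l k y i| ≤ (2 + 2 * χ * hN N * N) * ε := by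
  have hi' := mem_Icc.1 hi
  have hout : ∀ j, 1 ≤ j → j ≤ N → (j < l ∨ l + k - 1 < j) →
      j ∈ Icc 1 N \ Icc l (l + k - 1) := by
    intro j h1 h2 h3
    simp only [Finset.mem_sdiff, mem_Icc]
    omega
  have hup : |(if i < N then 1 / (y (i + 1) - y i) else 0)
      - (if i < l + k - 1 then 1 / (y (i + 1) - y i) else 0)| ≤ ε := by
    split_ifs
    · simpa using hε0
    · simpa using hε _ (hout _ (by omega) (by omega) (by omega))
    · omega
    · simpa using hε0
  have hdown : |(if 1 < i then 1 / (y i - y (i - 1)) else 0)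
      - (if l < i then 1 / (y i - y (i - 1)) else 0)| ≤ ε := by
    split_ifs
    · simpa using hε0
    · rw [sub_zero, one_div, abs_inv, abs_sub_comm, ← abs_inv, ← one_div]
      exact hε _ (hout _ (by omega) (by omega) (by omega))
    · omega
    · simpa using hε0
  have hsplit : ∑ j ∈ (Icc 1 N).erase i, 1 / (y j - y i)
      = ∑ j ∈ Icc 1 N \ Icc l (l + k - 1), 1 / (y j - y i)
        + ∑ j ∈ (Icc l (l + k - 1)).erase i, 1 / (y j - y i) := by
    have hsub : (Icc l (l + k - 1)).erase i ⊆ (Icc 1 N).erase i :=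
      erase_subset_erase _ fun j hj => by simp only [mem_Icc] at hj ⊢; omega
    have hO : (Icc 1 N).erase i \ (Icc l (l + k - 1)).erase i = Icc 1 N \ Icc l (l + k - 1) := by
      ext j
      simp only [Finset.mem_sdiff, mem_erase, mem_Icc]
      omega
    rw [← sum_sdiff hsub, hO]
  have houter : |∑ j ∈ Icc 1 N \ Icc l (l + k - 1), 1 / (y j - y i)| ≤ N * ε :=
    calc _ ≤ ∑ j ∈ Icc 1 N \ Icc l (l + k - 1), |1 / (y j - y i)| := abs_sum_le_sum_abs _ _
      _ ≤ #(Icc 1 N \ Icc l (l + k - 1)) • ε := sum_le_card_nsmul _ _ _ hε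
      _ ≤ N * ε := by
          rw [nsmul_eq_mul]
          gcongr
          have := card_le_card (sdiff_subset (s := Icc 1 N) (t := Icc l (l + k - 1)))
          rw [Nat.card_Icc, add_tsub_cancel_right] at this
          exact_mod_cast this
  have hc : 0 ≤ 2 * χ * hN N := by unfold hN; positivity
  have hinter : |2 * χ * hN N * ∑ j ∈ Icc 1 N \ Icc l (l + k - 1), 1 / (y j - y i)|
      ≤ 2 * χ * hN N * (N * ε) := by
    rw [abs_mul, abs_of_nonneg hc]
    gcongr
  have hdiff : gradResc N χ α y i - gradRescK N χ α l k y i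
      = ((if i < N then 1 / (y (i + 1) - y i) else 0)
          - (if i < l + k - 1 then 1 / (y (i + 1) - y i) else 0))
        - ((if 1 < i then 1 / (y i - y (i - 1)) else 0)
          - (if l < i then 1 / (y i - y (i - 1)) else 0))
        - 2 * χ * hN N * ∑ j ∈ Icc 1 N \ Icc l (l + k - 1), 1 / (y j - y i) := by
    rw [gradResc, gradRescK, hsplit]
    ring
  rw [hdiff]
  have := abs_le.1 hup
  have := abs_le.1 hdown
  have := abs_le.1 hinter
  exact abs_le.2 ⟨by linarith, by linarith⟩

theorem exists_le_ErescK {N l k : ℕ} {χ α A : ℝ} (hk : 2 ≤ k) (hχ : 0 ≤ χ) (hα : 0 ≤ α)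
    (hA : 0 < A) :
    ∃ m, ∀ y : ℕ → ℝ, (∀ i ∈ Icc l (l + k - 1), |y i| ≤ A) →
      (∀ i ∈ Icc l (l + k - 1), ∀ j ∈ Icc l (l + k - 1), i ≠ j → 1 / A ≤ |y i - y j|) →
      m ≤ ErescK N χ α l k y := by
  refine ⟨-∑ _i ∈ Icc l (l + k - 2), Real.log (2 * A)
    + χ * hN N * ∑ i ∈ Icc l (l + k - 1), ∑ _j ∈ (Icc l (l + k - 1)).erase i, Real.log (1 / A)
    - α / 2 * ∑ _i ∈ Icc l (l + k - 1), A ^ 2, fun y hy hsep => ?_⟩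
  have hgap : ∀ i ∈ Icc l (l + k - 2), Real.log (y (i + 1) - y i) ≤ Real.log (2 * A) := by
    intro i hi
    have hi' := mem_Icc.1 hi
    have h1 := hy i (mem_Icc.2 (by omega))
    have h2 := hy (i + 1) (mem_Icc.2 (by omega))
    rw [← Real.log_abs]
    refine Real.log_le_log ((one_div_pos.2 hA).trans_le
      (hsep _ (mem_Icc.2 (by omega)) _ (mem_Icc.2 (by omega)) (by omega))) ?_
    linarith [abs_sub (y (i + 1)) (y i)]
  have hpair : ∀ i ∈ Icc l (l + k - 1), ∀ j ∈ (Icc l (l + k - 1)).erase i,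
      Real.log (1 / A) ≤ Real.log |y i - y j| := fun i hi j hj =>
    Real.log_le_log (one_div_pos.2 hA) (hsep i hi j (mem_of_mem_erase hj) (ne_of_mem_erase hj).symm)
  have hsq : ∀ i ∈ Icc l (l + k - 1), y i ^ 2 ≤ A ^ 2 := fun i hi =>
    sq_le_sq.2 ((hy i hi).trans (le_abs_self A))
  have h1 := sum_le_sum hgap
  have h2 := mul_le_mul_of_nonneg_left (sum_le_sum fun i hi => sum_le_sum (hpair i hi))
    (show 0 ≤ χ * hN N by unfold hN; positivity)
  have h3 := mul_le_mul_of_nonneg_left (sum_le_sum hsq) (by linarith : 0 ≤ α / 2)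
  unfold ErescK
  linarith

theorem sum_neighbour_mul (r : ℕ → ℕ → ℝ) (v : ℕ → ℝ) {a b : ℕ} (hab : a ≤ b + 1) :
    ∑ i ∈ Icc a (b + 1),
        ((if i < b + 1 then r i (i + 1) else 0) - (if a < i then r (i - 1) i else 0)) * v i
      = -∑ i ∈ Icc a b, r i (i + 1) * (v (i + 1) - v i) := by
  have htop : ∑ i ∈ Icc a (b + 1), (if i < b + 1 then r i (i + 1) else 0) * v i
      = ∑ i ∈ Icc a b, r i (i + 1) * v i := by
    rw [sum_Icc_succ_top (by omega), if_neg (lt_irrefl _), zero_mul, add_zero]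
    exact sum_congr rfl fun i hi => by rw [if_pos (by rw [mem_Icc] at hi; omega)]
  have hbot : ∑ i ∈ Icc a (b + 1), (if a < i then r (i - 1) i else 0) * v i
      = ∑ i ∈ Icc a b, r i (i + 1) * v (i + 1) := by
    rw [← sum_Ioc_add_eq_sum_Icc (by omega), if_neg (lt_irrefl _), zero_mul, add_zero,
      ← Icc_add_one_left_eq_Ioc, ← map_add_right_Icc a b 1, sum_map]
    exact sum_congr rfl fun i hi => by rw [mem_Icc] at hi; simp [show a < i + 1 by omega]
  simp only [sub_mul, sum_sub_distrib, htop, hbot, mul_sub]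
  ring

theorem two_mul_sum_sum_erase_one_div_sub_mul {ι : Type*} [DecidableEq ι] (s : Finset ι)
    (y v : ι → ℝ) :
    2 * ∑ i ∈ s, (∑ j ∈ s.erase i, 1 / (y j - y i)) * v i
      = -∑ i ∈ s, ∑ j ∈ s.erase i, (v i - v j) / (y i - y j) := by
  have hswap : ∑ i ∈ s, ∑ j ∈ s.erase i, v j / (y i - y j)
      = ∑ i ∈ s, ∑ j ∈ s.erase i, v i / (y j - y i) :=
    sum_comm' fun i j => by simp only [mem_erase]; aesop
  have hanti : ∑ i ∈ s, ∑ j ∈ s.erase i, v i / (y i - y j)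
      = -∑ i ∈ s, ∑ j ∈ s.erase i, v i / (y j - y i) := by
    simp only [← sum_neg_distrib, ← div_neg, neg_sub]
  simp only [sub_div, sum_sub_distrib, hswap, hanti, sum_mul, one_div_mul_eq_div]
  ring

/-- The right-hand side is the derivative of `ErescK` along `v`, term by term. -/
theorem sum_gradRescK_mul {N l k : ℕ} {χ α : ℝ} (hk : 2 ≤ k) (y v : ℕ → ℝ) :
    ∑ i ∈ Icc l (l + k - 1), gradRescK N χ α l k y i * v i
      = -∑ i ∈ Icc l (l + k - 2), (v (i + 1) - v i) / (y (i + 1) - y i)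
        + χ * hN N * ∑ i ∈ Icc l (l + k - 1), ∑ j ∈ (Icc l (l + k - 1)).erase i,
            (v i - v j) / (y i - y j)
        - α / 2 * ∑ i ∈ Icc l (l + k - 1), 2 * y i * v i := by
  have hnb := sum_neighbour_mul (fun a b => 1 / (y b - y a)) v (a := l) (b := l + k - 2) (by omega)
  rw [show l + k - 2 + 1 = l + k - 1 by omega] at hnb
  have hint := two_mul_sum_sum_erase_one_div_sub_mul (Icc l (l + k - 1)) y v
  have hinter : ∑ i ∈ Icc l (l + k - 1),
        (2 * χ * hN N * ∑ j ∈ (Icc l (l + k - 1)).erase i, 1 / (y j - y i)) * v i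
      = χ * hN N * (2 * ∑ i ∈ Icc l (l + k - 1),
          (∑ j ∈ (Icc l (l + k - 1)).erase i, 1 / (y j - y i)) * v i) := by
    rw [← mul_assoc, mul_sum]
    exact sum_congr rfl fun _ _ => by ring
  have hconf : ∑ i ∈ Icc l (l + k - 1), α * y i * v i
      = α / 2 * ∑ i ∈ Icc l (l + k - 1), 2 * y i * v i := by
    rw [mul_sum]
    exact sum_congr rfl fun _ _ => by ring
  simp only [sub_mul, sum_sub_distrib, one_div_mul_eq_div] at hnb
  simp only [gradRescK, sub_mul, sum_sub_distrib, hinter, hint, hconf]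
  linear_combination hnb

theorem hasDerivAt_ErescK {N l k : ℕ} {χ α t : ℝ} {Y : ℕ → ℝ → ℝ} {v : ℕ → ℝ} (hk : 2 ≤ k)
    (hY : ∀ i ∈ Icc l (l + k - 1), HasDerivAt (Y i) (v i) t)
    (hsep : ∀ i ∈ Icc l (l + k - 1), ∀ j ∈ Icc l (l + k - 1), i ≠ j → Y i t ≠ Y j t) :
    HasDerivAt (fun s => ErescK N χ α l k fun i => Y i s)
      (∑ i ∈ Icc l (l + k - 1), gradRescK N χ α l k (fun i => Y i t) i * v i) t := by
  have hgap : HasDerivAt (fun s => ∑ i ∈ Icc l (l + k - 2), Real.log (Y (i + 1) s - Y i s))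
      (∑ i ∈ Icc l (l + k - 2), (v (i + 1) - v i) / (Y (i + 1) t - Y i t)) t :=
    HasDerivAt.fun_sum fun i hi => by
      have hi' := mem_Icc.1 hi
      exact ((hY (i + 1) (mem_Icc.2 (by omega))).sub (hY i (mem_Icc.2 (by omega)))).log
        (sub_ne_zero.2 (hsep _ (mem_Icc.2 (by omega)) _ (mem_Icc.2 (by omega)) (by omega)))
  have hpair : HasDerivAt (fun s => ∑ i ∈ Icc l (l + k - 1),
        ∑ j ∈ (Icc l (l + k - 1)).erase i, Real.log |Y i s - Y j s|)
      (∑ i ∈ Icc l (l + k - 1), ∑ j ∈ (Icc l (l + k - 1)).erase i,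
        (v i - v j) / (Y i t - Y j t)) t := by
    simp only [Real.log_abs]
    exact HasDerivAt.fun_sum fun i hi => HasDerivAt.fun_sum fun j hj =>
      ((hY i hi).sub (hY j (mem_of_mem_erase hj))).log
        (sub_ne_zero.2 (hsep i hi j (mem_of_mem_erase hj) (ne_of_mem_erase hj).symm))
  have hconf : HasDerivAt (fun s => ∑ i ∈ Icc l (l + k - 1), Y i s ^ 2)
      (∑ i ∈ Icc l (l + k - 1), 2 * Y i t * v i) t :=
    HasDerivAt.fun_sum fun i hi => by simpa using (hY i hi).fun_pow 2
  rw [sum_gradRescK_mul hk]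
  exact (hgap.neg.add (hpair.const_mul _)).sub (hconf.const_mul _)

theorem tendsto_exp_neg_mul_atTop {α : ℝ} (hα : 0 < α) :
    Tendsto (fun τ => Real.exp (-α * τ)) atTop (𝓝 0) :=
  Real.tendsto_exp_atBot.comp (tendsto_id.const_mul_atTop_of_neg (neg_lt_zero.2 hα))

theorem Icc_inner_subset {N l k : ℕ} (hl : 1 ≤ l) (hlk : l + k - 1 ≤ N) :
    Icc l (l + k - 1) ⊆ Icc 1 N := fun i hi => by
  simp only [mem_Icc] at hi ⊢
  omega

/-- `|∇E^resc_k(y)|²`. -/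
def gradRescKNormSq (N : ℕ) (χ α : ℝ) (l k : ℕ) (y : ℕ → ℝ) : ℝ :=
  ∑ i ∈ Icc l (l + k - 1), gradRescK N χ α l k y i ^ 2

theorem gradRescKNormSq_nonneg (N : ℕ) (χ α : ℝ) (l k : ℕ) (y : ℕ → ℝ) :
    0 ≤ gradRescKNormSq N χ α l k y :=
  sum_nonneg fun _ _ => sq_nonneg _

/-- A solution of the rescaled flow satisfying (R2), (R5) and, within the inner set
`I = [l, l+k-1]`, (R6). -/
structure IsInnerCluster (N k l : ℕ) (χ α A : ℝ) (Y : ℕ → ℝ → ℝ) : Prop where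
  two_le : 2 ≤ k
  one_le : 1 ≤ l
  le_N : l + k - 1 ≤ N
  chi_nonneg : 0 ≤ χ
  alpha_pos : 0 < α
  A_pos : 0 < A
  sol : IsRescSol N χ α Y
  bounded : ∀ τ : ℝ, 0 ≤ τ → ∀ i ∈ Icc l (l + k - 1), |Y i τ| ≤ A
  separated : ∀ τ : ℝ, 0 ≤ τ → ∀ i ∈ Icc l (l + k - 1), ∀ j ∈ Icc l (l + k - 1), i ≠ j →
    1 / A ≤ |Y i τ - Y j τ|
  decoupled : ∀ τ : ℝ, 0 ≤ τ →
    extPot N (Icc l (l + k - 1)) 2 (fun i => Y i τ) ≤ A ^ 2 * Real.exp (-2 * α * τ)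

namespace IsInnerCluster

variable {N k l : ℕ} {χ α A : ℝ} {Y : ℕ → ℝ → ℝ}

theorem card_inner (h : IsInnerCluster N k l χ α A Y) : #(Icc l (l + k - 1)) = k := by
  have := h.two_le
  rw [Nat.card_Icc]
  omega

theorem hasDerivAt (h : IsInnerCluster N k l χ α A Y) {i : ℕ} (hi : i ∈ Icc l (l + k - 1))
    {τ : ℝ} (hτ : 0 ≤ τ) : HasDerivAt (Y i) (-gradResc N χ α (fun j => Y j τ) i) τ :=
  h.sol.ode i (Icc_inner_subset h.one_le h.le_N hi) τ hτ

theorem abs_one_div_outer_le (h : IsInnerCluster N k l χ α A Y) {τ : ℝ} (hτ : 0 ≤ τ) {i j : ℕ}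
    (hi : i ∈ Icc l (l + k - 1)) (hj : j ∈ Icc 1 N \ Icc l (l + k - 1)) :
    |1 / (Y j τ - Y i τ)| ≤ A * Real.exp (-α * τ) := by
  refine abs_le_of_sq_le_sq ?_ (by have := h.A_pos; positivity)
  calc (1 / (Y j τ - Y i τ)) ^ 2 = 1 / (Y j τ - Y i τ) ^ 2 := by rw [one_div_pow]
    _ ≤ _ := (one_div_sq_le_extPot hi hj).trans (h.decoupled τ hτ)
    _ = _ := by rw [mul_pow, ← Real.exp_nat_mul]; ring_nf

theorem exists_bound_gradRescK (h : IsInnerCluster N k l χ α A Y) :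
    ∃ B, 0 ≤ B ∧ ∀ τ : ℝ, 0 ≤ τ → ∀ i ∈ Icc l (l + k - 1),
      |gradRescK N χ α l k (fun j => Y j τ) i| ≤ B := by
  have := h.chi_nonneg
  have := h.alpha_pos
  have := h.A_pos
  refine ⟨(2 + 2 * χ * hN N * k) * A + α * A, by unfold hN; positivity, fun τ hτ i hi => ?_⟩
  -- compare with the zero configuration, where `gradRescK` vanishes because `1 / 0 = 0`
  have := abs_gradRescK_sub_le (N := N) (z := 0) (D := A) h.chi_nonneg h.alpha_pos.le h.A_pos.le hi
    fun a ha b hb hab => by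
      simpa using abs_one_div_le_of_one_div_le_abs h.A_pos (h.separated τ hτ a ha b hb hab)
  rw [gradRescK_zero, sub_zero, Pi.zero_apply, sub_zero] at this
  exact this.trans (by gcongr; exact h.bounded τ hτ i hi)

theorem exists_bound_gradResc_sub (h : IsInnerCluster N k l χ α A Y) :
    ∃ C, 0 ≤ C ∧ ∀ τ : ℝ, 0 ≤ τ → ∀ i ∈ Icc l (l + k - 1),
      |gradResc N χ α (fun j => Y j τ) i - gradRescK N χ α l k (fun j => Y j τ) i|
        ≤ C * Real.exp (-α * τ) := by
  have := h.chi_nonneg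
  have := h.A_pos
  refine ⟨(2 + 2 * χ * hN N * N) * A, by unfold hN; positivity, fun τ hτ i hi => ?_⟩
  rw [mul_assoc]
  exact abs_gradResc_sub_gradRescK_le h.chi_nonneg (by positivity) h.one_le h.le_N hi
    fun j hj => h.abs_one_div_outer_le hτ hi hj

theorem exists_lipschitz (h : IsInnerCluster N k l χ α A Y) :
    ∃ M, 0 ≤ M ∧ ∀ i ∈ Icc l (l + k - 1), ∀ σ : ℝ, 0 ≤ σ → ∀ τ : ℝ, 0 ≤ τ →
      |Y i σ - Y i τ| ≤ M * |σ - τ| := by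
  obtain ⟨B, hB0, hB⟩ := h.exists_bound_gradRescK
  obtain ⟨C, hC0, hC⟩ := h.exists_bound_gradResc_sub
  refine ⟨B + C, by positivity, fun i hi σ hσ τ hτ => ?_⟩
  have hderiv : ∀ x ∈ Set.Ici (0 : ℝ), ‖-gradResc N χ α (fun j => Y j x) i‖ ≤ B + C := by
    intro x hx
    have hexp : Real.exp (-α * x) ≤ 1 :=
      Real.exp_le_one_iff.2 (by nlinarith [h.alpha_pos, Set.mem_Ici.1 hx])
    have := abs_sub_abs_le_abs_sub (gradResc N χ α (fun j => Y j x) i)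
      (gradRescK N χ α l k (fun j => Y j x) i)
    rw [norm_neg, Real.norm_eq_abs]
    linarith [hB x hx i hi, hC x hx i hi, mul_le_of_le_one_right hC0 hexp]
  simpa [Real.norm_eq_abs] using (convex_Ici 0).norm_image_sub_le_of_norm_hasDerivWithin_le
    (fun x hx => (h.hasDerivAt hi hx).hasDerivWithinAt) hderiv hτ hσ

theorem exists_lipschitz_gradRescK (h : IsInnerCluster N k l χ α A Y) :
    ∃ L, 0 ≤ L ∧ ∀ i ∈ Icc l (l + k - 1), ∀ σ : ℝ, 0 ≤ σ → ∀ τ : ℝ, 0 ≤ τ →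
      |gradRescK N χ α l k (fun j => Y j σ) i - gradRescK N χ α l k (fun j => Y j τ) i|
        ≤ L * |σ - τ| := by
  obtain ⟨M, hM0, hM⟩ := h.exists_lipschitz
  have := h.chi_nonneg
  have := h.alpha_pos
  refine ⟨(2 + 2 * χ * hN N * k) * (A ^ 2 * (2 * M)) + α * M, by unfold hN; positivity,
    fun i hi σ hσ τ hτ => ?_⟩
  have hpair : ∀ a ∈ Icc l (l + k - 1), ∀ b ∈ Icc l (l + k - 1), a ≠ b →
      |1 / (Y a σ - Y b σ) - 1 / (Y a τ - Y b τ)| ≤ A ^ 2 * (2 * M) * |σ - τ| := by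
    intro a ha b hb hab
    calc _ ≤ |(Y a σ - Y b σ) - (Y a τ - Y b τ)| / (1 / A) ^ 2 :=
          abs_one_div_sub_one_div_le (one_div_pos.2 h.A_pos) (h.separated σ hσ a ha b hb hab)
            (h.separated τ hτ a ha b hb hab)
      _ = A ^ 2 * |(Y a σ - Y a τ) - (Y b σ - Y b τ)| := by
          rw [one_div, inv_pow, div_inv_eq_mul, mul_comm]
          ring_nf
      _ ≤ A ^ 2 * (M * |σ - τ| + M * |σ - τ|) := by
          gcongr
          exact (abs_sub _ _).trans (add_le_add (hM a ha σ hσ τ hτ) (hM b hb σ hσ τ hτ))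
      _ = _ := by ring
  calc _ ≤ (2 + 2 * χ * hN N * k) * (A ^ 2 * (2 * M) * |σ - τ|) + α * |Y i σ - Y i τ| :=
        abs_gradRescK_sub_le h.chi_nonneg h.alpha_pos.le (by positivity) hi hpair
    _ ≤ (2 + 2 * χ * hN N * k) * (A ^ 2 * (2 * M) * |σ - τ|) + α * (M * |σ - τ|) := by
        gcongr
        exact hM i hi σ hσ τ hτ
    _ = _ := by ring

theorem uniformContinuousOn_gradRescKNormSq (h : IsInnerCluster N k l χ α A Y) :
    UniformContinuousOn (fun τ => gradRescKNormSq N χ α l k fun j => Y j τ) (Set.Ici 0) := by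
  obtain ⟨B, hB0, hB⟩ := h.exists_bound_gradRescK
  obtain ⟨L, hL0, hL⟩ := h.exists_lipschitz_gradRescK
  refine (LipschitzOnWith.of_dist_le' (K := k * (2 * B * L)) fun σ hσ τ hτ => ?_)
    |>.uniformContinuousOn
  rw [Real.dist_eq, Real.dist_eq, gradRescKNormSq, gradRescKNormSq, ← sum_sub_distrib]
  calc _ ≤ ∑ i ∈ Icc l (l + k - 1),
        |gradRescK N χ α l k (fun j => Y j σ) i ^ 2 - gradRescK N χ α l k (fun j => Y j τ) i ^ 2| :=
        abs_sum_le_sum_abs _ _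
    _ ≤ #(Icc l (l + k - 1)) • (2 * B * (L * |σ - τ|)) := sum_le_card_nsmul _ _ _ fun i hi =>
        (abs_sq_sub_sq_le (hB σ hσ i hi) (hB τ hτ i hi)).trans (by gcongr; exact hL i hi σ hσ τ hτ)
    _ = _ := by rw [nsmul_eq_mul, h.card_inner]; ring

theorem hasDerivAt_ErescK (h : IsInnerCluster N k l χ α A Y) {τ : ℝ} (hτ : 0 ≤ τ) :
    HasDerivAt (fun s => ErescK N χ α l k fun i => Y i s)
      (∑ i ∈ Icc l (l + k - 1),
        gradRescK N χ α l k (fun j => Y j τ) i * -gradResc N χ α (fun j => Y j τ) i) τ :=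
  _root_.hasDerivAt_ErescK h.two_le (fun _ hi => h.hasDerivAt hi hτ) fun i hi j hj hij =>
    sub_ne_zero.1 (abs_pos.1 ((one_div_pos.2 h.A_pos).trans_le (h.separated τ hτ i hi j hj hij)))

theorem exists_deriv_ErescK_le (h : IsInnerCluster N k l χ α A Y) :
    ∃ c, 0 ≤ c ∧ ∀ τ : ℝ, 0 ≤ τ →
      ∑ i ∈ Icc l (l + k - 1),
          gradRescK N χ α l k (fun j => Y j τ) i * -gradResc N χ α (fun j => Y j τ) i
        ≤ -gradRescKNormSq N χ α l k (fun j => Y j τ) + c * Real.exp (-α * τ) := by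
  obtain ⟨B, hB0, hB⟩ := h.exists_bound_gradRescK
  obtain ⟨C, hC0, hC⟩ := h.exists_bound_gradResc_sub
  refine ⟨k * (B * C), by positivity, fun τ hτ => ?_⟩
  set g := fun i => gradRescK N χ α l k (fun j => Y j τ) i
  set p := fun i => gradResc N χ α (fun j => Y j τ) i
  have herr : |∑ i ∈ Icc l (l + k - 1), g i * (p i - g i)| ≤ k * (B * C) * Real.exp (-α * τ) :=
    calc _ ≤ ∑ i ∈ Icc l (l + k - 1), |g i * (p i - g i)| := abs_sum_le_sum_abs _ _
      _ ≤ #(Icc l (l + k - 1)) • (B * (C * Real.exp (-α * τ))) :=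
          sum_le_card_nsmul _ _ _ fun i hi => by
            rw [abs_mul]
            exact mul_le_mul (hB τ hτ i hi) (hC τ hτ i hi) (abs_nonneg _) hB0
      _ = _ := by rw [nsmul_eq_mul, h.card_inner]; ring
  have hsplit : ∑ i ∈ Icc l (l + k - 1), g i * -p i
      = -gradRescKNormSq N χ α l k (fun j => Y j τ)
        - ∑ i ∈ Icc l (l + k - 1), g i * (p i - g i) := by
    rw [gradRescKNormSq, ← sum_neg_distrib, ← sum_sub_distrib]
    exact sum_congr rfl fun _ _ => by ring
  linarith [(abs_le.1 herr).1]

theorem exists_lyapunov (h : IsInnerCluster N k l χ α A Y) :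
    ∃ Φ Φ' : ℝ → ℝ, (∀ τ : ℝ, 0 ≤ τ → HasDerivAt Φ (Φ' τ) τ) ∧
      (∀ τ : ℝ, 0 ≤ τ → Φ' τ ≤ -gradRescKNormSq N χ α l k fun j => Y j τ) ∧
      (∃ e, Tendsto Φ atTop (𝓝 e)) ∧
      Tendsto (fun τ => Φ τ - ErescK N χ α l k fun i => Y i τ) atTop (𝓝 0) := by
  obtain ⟨c, hc0, hc⟩ := h.exists_deriv_ErescK_le
  obtain ⟨m, hm⟩ := exists_le_ErescK (N := N) (l := l) h.two_le h.chi_nonneg h.alpha_pos.le h.A_pos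
  have hα := h.alpha_pos
  have hΦ : ∀ τ : ℝ, 0 ≤ τ → HasDerivAt
      (fun τ => (ErescK N χ α l k fun i => Y i τ) + c / α * Real.exp (-α * τ))
      (∑ i ∈ Icc l (l + k - 1),
          gradRescK N χ α l k (fun j => Y j τ) i * -gradResc N χ α (fun j => Y j τ) i
        - c * Real.exp (-α * τ)) τ := by
    intro τ hτ
    have hexp : HasDerivAt (fun s => Real.exp (-α * s)) (-α * Real.exp (-α * τ)) τ := by
      simpa [mul_comm] using ((hasDerivAt_id τ).const_mul (-α)).exp
    refine ((h.hasDerivAt_ErescK hτ).add (hexp.const_mul (c / α))).congr_deriv ?_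
    field_simp
    ring
  refine ⟨_, _, hΦ, fun τ hτ => by linarith [hc τ hτ],
    exists_tendsto_of_hasDerivAt_nonpos (m := m) hΦ
      (fun τ hτ => by linarith [hc τ hτ, gradRescKNormSq_nonneg N χ α l k fun j => Y j τ])
      fun τ hτ => ?_, ?_⟩
  · have := hm _ (h.bounded τ hτ) (h.separated τ hτ)
    have : 0 ≤ c / α * Real.exp (-α * τ) := by positivity
    linarith
  · simpa using (tendsto_exp_neg_mul_atTop hα).const_mul (c / α)

theorem exists_tendsto_ErescK (h : IsInnerCluster N k l χ α A Y) :
    ∃ e, Tendsto (fun τ => ErescK N χ α l k fun i => Y i τ) atTop (𝓝 e) := by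
  obtain ⟨Φ, -, -, -, ⟨e, he⟩, hΦE⟩ := h.exists_lyapunov
  exact ⟨e, by simpa using he.sub hΦE⟩

theorem tendsto_gradRescKNormSq (h : IsInnerCluster N k l χ α A Y) :
    Tendsto (fun τ => gradRescKNormSq N χ α l k fun j => Y j τ) atTop (𝓝 0) := by
  obtain ⟨Φ, Φ', hΦ, hΦ', ⟨e, he⟩, -⟩ := h.exists_lyapunov
  exact tendsto_zero_of_hasDerivAt_le_neg hΦ hΦ' he
    (fun τ _ => gradRescKNormSq_nonneg _ _ _ _ _ _) h.uniformContinuousOn_gradRescKNormSq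

theorem tendsto_deriv (h : IsInnerCluster N k l χ α A Y) {i : ℕ} (hi : i ∈ Icc l (l + k - 1)) :
    Tendsto (fun τ => deriv (Y i) τ) atTop (𝓝 0) := by
  obtain ⟨C, -, hC⟩ := h.exists_bound_gradResc_sub
  have hgrad : Tendsto (fun τ => gradRescK N χ α l k (fun j => Y j τ) i) atTop (𝓝 0) :=
    squeeze_zero_norm (fun τ => Real.abs_le_sqrt (single_le_sum
      (f := fun i => gradRescK N χ α l k (fun j => Y j τ) i ^ 2) (fun _ _ => sq_nonneg _) hi))
      (by simpa [gradRescKNormSq] using h.tendsto_gradRescKNormSq.sqrt)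
  have herr : Tendsto (fun τ => gradResc N χ α (fun j => Y j τ) i
      - gradRescK N χ α l k (fun j => Y j τ) i) atTop (𝓝 0) :=
    squeeze_zero_norm' (eventually_ge_atTop 0 |>.mono fun τ hτ => hC τ hτ i hi)
      (by simpa using (tendsto_exp_neg_mul_atTop h.alpha_pos).const_mul C)
  have hderiv := (hgrad.add herr).neg
  simp only [add_sub_cancel, add_zero, neg_zero] at hderiv
  refine hderiv.congr' ?_
  filter_upwards [eventually_ge_atTop 0] with τ hτ
  rw [(h.hasDerivAt hi hτ).deriv]

end IsInnerCluster

theorem stmt16_general (N k l : ℕ) (hk : 2 ≤ k)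
    (hl : 1 ≤ l) (hlk : l + k - 1 ≤ N)
    (χ α : ℝ) (hχ1 : ((N : ℝ) + 1) / k < χ)
    (hα : α = ((k : ℝ) - 1) * (χ * k / ((N : ℝ) + 1) - 1))
    (Y : ℕ → ℝ → ℝ) (hY : IsRescSol N χ α Y)
    (A : ℝ) (hA : 0 < A)
    (hR2 : ∀ τ : ℝ, 0 ≤ τ → ∀ i ∈ Finset.Icc l (l + k - 1), |Y i τ| ≤ A)
    (hR5 : ∀ τ : ℝ, 0 ≤ τ →
      extPot N (Finset.Icc l (l + k - 1)) 2 (fun i => Y i τ) ≤ A ^ 2 * Real.exp (-2 * α * τ))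
    (hR6 : ∀ τ : ℝ, 0 ≤ τ → ∀ i ∈ Finset.Icc 1 N, ∀ j ∈ Finset.Icc 1 N, i ≠ j →
      1 / A ≤ |Y i τ - Y j τ|) :
    (∀ i ∈ Finset.Icc l (l + k - 1),
        Filter.Tendsto (fun τ => deriv (Y i) τ) atTop (nhds 0)) ∧
    (∃ e : ℝ, Filter.Tendsto (fun τ => ErescK N χ α l k (fun i => Y i τ)) atTop (nhds e)) ∧
    Filter.Tendsto
      (fun τ => Real.sqrt (∑ i ∈ Finset.Icc l (l + k - 1),
        (gradRescK N χ α l k (fun j => Y j τ) i) ^ 2)) atTop (nhds 0) := by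
  have hk' : (2 : ℝ) ≤ k := by exact_mod_cast hk
  have hχ : 0 < χ := lt_trans (by positivity) hχ1
  have hαpos : 0 < α := by
    rw [div_lt_iff₀ (by positivity)] at hχ1
    rw [hα]
    exact mul_pos (by linarith) (by rw [sub_pos, one_lt_div (by positivity)]; linarith)
  have hI := Icc_inner_subset hl hlk
  have h : IsInnerCluster N k l χ α A Y :=
    ⟨hk, hl, hlk, hχ.le, hαpos, hA, hY, hR2,
      fun τ hτ i hi j hj => hR6 τ hτ i (hI hi) j (hI hj), hR5⟩
  exact ⟨fun i hi => h.tendsto_deriv hi, h.exists_tendsto_ErescK,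
    by simpa [gradRescKNormSq] using h.tendsto_gradRescKNormSq.sqrt⟩

/-- for a solution of the rescaled gradient flow satisfying (R1)–(R6) with
constant `A` for the inner set `I = [l, l+k-1]`:
(i) `Y_i'(τ) → 0` as `τ → ∞` for every `i ∈ I`;
(ii) `E^resc_k(Y(τ))` converges to a limit `e_∞`;
(iii) `∇E^resc_k((Y_i(τ))_{i∈I}) → 0` as `τ → ∞`. -/
theorem stmt16 (N k l : ℕ) (hN2 : 2 ≤ N) (hk : 2 ≤ k) (hkN : k ≤ N)
    (hl : 1 ≤ l) (hlk : l + k - 1 ≤ N)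
    (χ α : ℝ) (hχ1 : ((N : ℝ) + 1) / k < χ) (hχ2 : χ < ((N : ℝ) + 1) / ((k : ℝ) - 1))
    (hα : α = ((k : ℝ) - 1) * (χ * k / ((N : ℝ) + 1) - 1))
    (Y : ℕ → ℝ → ℝ) (hY : IsRescSol N χ α Y)
    (A : ℝ) (hA : 0 < A)
    (hR2 : ∀ τ : ℝ, 0 ≤ τ → ∀ i ∈ Finset.Icc l (l + k - 1), |Y i τ| ≤ A)
    (hR3 : ∀ τ : ℝ, 0 ≤ τ → ∀ i, l ≤ i → i < l + k - 1 → 1 / A ≤ Y (i + 1) τ - Y i τ)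
    (hR4 : ∀ j ∈ Finset.Icc 1 N, j ∉ Finset.Icc l (l + k - 1) →
      Filter.Tendsto (fun τ => |Y j τ|) atTop atTop)
    (hR5 : ∀ τ : ℝ, 0 ≤ τ →
      extPot N (Finset.Icc l (l + k - 1)) 2 (fun i => Y i τ) ≤ A ^ 2 * Real.exp (-2 * α * τ))
    (hR6 : ∀ τ : ℝ, 0 ≤ τ → ∀ i ∈ Finset.Icc 1 N, ∀ j ∈ Finset.Icc 1 N, i ≠ j →
      1 / A ≤ |Y i τ - Y j τ|) :
    (∀ i ∈ Finset.Icc l (l + k - 1),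
        Filter.Tendsto (fun τ => deriv (Y i) τ) atTop (nhds 0)) ∧
    (∃ e : ℝ, Filter.Tendsto (fun τ => ErescK N χ α l k (fun i => Y i τ)) atTop (nhds e)) ∧
    Filter.Tendsto
      (fun τ => Real.sqrt (∑ i ∈ Finset.Icc l (l + k - 1),
        (gradRescK N χ α l k (fun j => Y j τ) i) ^ 2)) atTop (nhds 0) :=
  stmt16_general N k l hk hl hlk χ α hχ1 hα Y hY A hA hR2 hR5 hR6
end
end

section
/- (Three particles, two collapse.) Assume χ > 2 and set ᾱ = 2(χ/2 − 1) = χ − 2. Let (u₁,u₂) be a solution of the three-particle relative-distance system on its maximal interval [0,T) with T < ∞ and u₂(0) > u₁(0) > 0, and suppose liminf_{t→T⁻} u₁(t) = 0. Then: (i) u₂ − u₁ is nondecreasing on [0,T), and hence u₂(t) ≥ u₂(0) − u₁(0) > 0 for all t; (ii) d/dt (u₁(t)²) ≤ −ᾱ for all t, and lim_{t→T⁻} u₁(t) = 0; (iii) u₁(t)² / (2ᾱ(T−t)) → 1 as t → T⁻; equivalently, the rescaled variable v₁ = u₁/√(2ᾱ(T−t)) tends to 1, while v₂ = u₂/√(2ᾱ(T−t))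 satisfies v₂(τ) ≥ (1/(A√(2ᾱT))) e^{ᾱτ} for some A > 0, where τ(t) = −(1/ᾱ) log(√(2ᾱ(T−t))/√(2ᾱT)). -/
open Filter

noncomputable section

/-- A solution of the three-particle relative-distance system on `[0,T)`:
`u₁ = X₂ - X₁ > 0`, `u₂ = X₃ - X₂ > 0`, with `2χh₃ = χ/2`. -/
structure Is3Sol (χ T : ℝ) (u₁ u₂ : ℝ → ℝ) : Prop where
  pos : ∀ t ∈ Set.Ico (0 : ℝ) T, 0 < u₁ t ∧ 0 < u₂ t
  ode1 : ∀ t ∈ Set.Ico (0 : ℝ) T,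
    HasDerivAt u₁
      (2 / u₁ t - 1 / u₂ t - (χ / 2) * (2 / u₁ t - 1 / u₂ t + 1 / (u₁ t + u₂ t))) t
  ode2 : ∀ t ∈ Set.Ico (0 : ℝ) T,
    HasDerivAt u₂
      (2 / u₂ t - 1 / u₁ t - (χ / 2) * (2 / u₂ t - 1 / u₁ t + 1 / (u₁ t + u₂ t))) t

/-- A solution on its maximal interval of existence `[0,T)`. -/
def Is3MaxSol (χ T : ℝ) (u₁ u₂ : ℝ → ℝ) : Prop :=
  Is3Sol χ T u₁ u₂ ∧
    ∀ T' > T, ∀ v₁ v₂ : ℝ → ℝ,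
      (∀ t ∈ Set.Ico (0 : ℝ) T, v₁ t = u₁ t ∧ v₂ t = u₂ t) → ¬ Is3Sol χ T' v₁ v₂

/-!
The gap `u₂ - u₁` has derivative `(3(χ - 2)/2)(1/u₁ - 1/u₂)`, which is nonnegative while
`u₁ < u₂`; so the ordering is preserved and the gap never drops below `u₂(0) - u₁(0)`.
The derivative of `u₁²` is `-2(χ - 2) + (χ - 2) u₁/u₂ - χ u₁/(u₁ + u₂) ≤ -(χ - 2)`, so `u₁`
decreases and its liminf at `T` is a limit, namely `0`. As `u₂` stays away from `0`, the
derivative of `u₁²` then tends to `-2(χ - 2)`, and L'Hôpital's rule gives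
`u₁² ~ 2(χ - 2)(T - t)`. The bound on `v₂` is the gap bound divided by `√(2(χ - 2)(T - t))`.
-/

open Set Topology

theorem monotoneOn_of_hasDerivAt_nonneg {D : Set ℝ} (hD : Convex ℝ D) {f f' : ℝ → ℝ}
    (hf : ∀ x ∈ D, HasDerivAt f (f' x) x) (hf' : ∀ x ∈ interior D, 0 ≤ f' x) :
    MonotoneOn f D :=
  monotoneOn_of_hasDerivWithinAt_nonneg hD
    (fun x hx => (hf x hx).continuousAt.continuousWithinAt)
    (fun x hx => (hf x (interior_subset hx)).hasDerivWithinAt) hf'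

theorem antitoneOn_of_hasDerivAt_nonpos {D : Set ℝ} (hD : Convex ℝ D) {f f' : ℝ → ℝ}
    (hf : ∀ x ∈ D, HasDerivAt f (f' x) x) (hf' : ∀ x ∈ interior D, f' x ≤ 0) :
    AntitoneOn f D :=
  antitoneOn_of_hasDerivWithinAt_nonpos hD
    (fun x hx => (hf x hx).continuousAt.continuousWithinAt)
    (fun x hx => (hf x (interior_subset hx)).hasDerivWithinAt) hf'

theorem pos_of_hasDerivAt_nonneg_of_pos {f f' : ℝ → ℝ} {a b : ℝ}
    (hf : ∀ x ∈ Ico a b, HasDerivAt f (f' x) x) (ha : 0 < f a)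
    (hf' : ∀ x ∈ Ico a b, 0 < f x → 0 ≤ f' x) {t : ℝ} (ht : t ∈ Ico a b) : 0 < f t := by
  by_contra! hft
  have hsub : Icc a t ⊆ Ico a b := Icc_subset_Ico_right ht.2
  set S := Icc a t ∩ f ⁻¹' Iic 0
  have hS : IsClosed S :=
    ContinuousOn.preimage_isClosed_of_isClosed
      (fun x hx => (hf x (hsub hx)).continuousAt.continuousWithinAt) isClosed_Icc isClosed_Iic
  have hSbdd : BddBelow S := ⟨a, fun x hx => hx.1.1⟩
  obtain ⟨⟨hat₀, ht₀t⟩, hft₀⟩ : sInf S ∈ S := hS.csInf_mem ⟨t, ⟨ht.1, le_rfl⟩, hft⟩ hSbdd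
  have hpos : ∀ x ∈ Ico a (sInf S), 0 < f x := fun x hx => by
    by_contra! hfx
    exact (csInf_le hSbdd ⟨⟨hx.1, hx.2.le.trans ht₀t⟩, hfx⟩).not_gt hx.2
  have hmono : MonotoneOn f (Icc a (sInf S)) :=
    monotoneOn_of_hasDerivAt_nonneg (convex_Icc _ _)
      (fun x hx => hf x (hsub ⟨hx.1, hx.2.trans ht₀t⟩)) fun x hx => by
        rw [interior_Icc] at hx
        have hx' : x ∈ Ico a (sInf S) := Ioo_subset_Ico_self hx
        exact hf' x (hsub ⟨hx'.1, hx'.2.le.trans ht₀t⟩) (hpos x hx')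
  have := hmono ⟨le_rfl, hat₀⟩ ⟨hat₀, le_rfl⟩ hat₀
  exact (ha.trans_le this).not_ge hft₀

theorem AntitoneOn.tendsto_nhdsLT_liminf {f : ℝ → ℝ} {a b : ℝ} (hab : a < b)
    (hf : AntitoneOn f (Ioo a b)) (hbdd : BddBelow (f '' Ioo a b)) :
    Tendsto f (𝓝[<] b) (𝓝 (liminf f (𝓝[<] b))) := by
  have hlim := hf.tendsto_nhdsWithin_Ioo_left (nonempty_Ioo.2 hab) hbdd
  rwa [hlim.liminf_eq]

theorem Real.exp_mul_neg_one_div_mul_log_div {a x y : ℝ} (ha : a ≠ 0) (hx : 0 < x)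
    (hy : 0 < y) : exp (a * (-(1 / a) * log (x / y))) = y / x := by
  rw [show a * (-(1 / a) * log (x / y)) = -log (x / y) by field_simp, exp_neg,
    exp_log (div_pos hx hy), inv_div]

/-- The derivative of `u₁²` along the system, evaluated at `u₁ = x`, `u₂ = y`. -/
def collapseRate (χ x y : ℝ) : ℝ :=
  -2 * (χ - 2) + (χ - 2) * (x / y) - χ * (x / (x + y))

theorem collapseRate_le {χ x y : ℝ} (hχ : 2 ≤ χ) (hx : 0 < x) (hxy : x ≤ y) :
    collapseRate χ x y ≤ -(χ - 2) := by
  have hxy' : x / y ≤ 1 := div_le_one_of_le₀ hxy (hx.le.trans hxy)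
  have hx' : 0 ≤ x / (x + y) := div_nonneg hx.le (by linarith)
  unfold collapseRate
  nlinarith

namespace Is3Sol

variable {χ T : ℝ} {u₁ u₂ : ℝ → ℝ} (hS : Is3Sol χ T u₁ u₂)
include hS

theorem hasDerivAt_snd_sub_fst {t : ℝ} (ht : t ∈ Ico 0 T) :
    HasDerivAt (fun s => u₂ s - u₁ s) (3 * (χ - 2) / 2 * (1 / u₁ t - 1 / u₂ t)) t :=
  ((hS.ode2 t ht).sub (hS.ode1 t ht)).congr_deriv (by ring)

theorem hasDerivAt_fst_sq {t : ℝ} (ht : t ∈ Ico 0 T) :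
    HasDerivAt (fun s => u₁ s ^ 2) (collapseRate χ (u₁ t) (u₂ t)) t := by
  obtain ⟨h₁, h₂⟩ := hS.pos t ht
  refine ((hS.ode1 t ht).fun_pow 2).congr_deriv ?_
  unfold collapseRate
  field_simp
  ring

theorem fst_lt_snd (hχ : 2 ≤ χ) (h0 : u₁ 0 < u₂ 0) {t : ℝ} (ht : t ∈ Ico 0 T) :
    u₁ t < u₂ t := by
  refine sub_pos.1 (pos_of_hasDerivAt_nonneg_of_pos (fun x hx => hS.hasDerivAt_snd_sub_fst hx)
    (sub_pos.2 h0) (fun x hx hpos => ?_) ht)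
  have h₁ := (hS.pos x hx).1
  have : 1 / u₂ x ≤ 1 / u₁ x := one_div_le_one_div_of_le h₁ (sub_pos.1 hpos).le
  have : 0 ≤ 3 * (χ - 2) / 2 := by linarith
  exact mul_nonneg this (sub_nonneg.2 ‹_›)

theorem monotoneOn_snd_sub_fst (hχ : 2 ≤ χ) (h0 : u₁ 0 < u₂ 0) :
    MonotoneOn (fun t => u₂ t - u₁ t) (Ico 0 T) :=
  monotoneOn_of_hasDerivAt_nonneg (convex_Ico 0 T) (fun x hx => hS.hasDerivAt_snd_sub_fst hx)
    fun x hx => by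
      have hx : x ∈ Ico 0 T := interior_subset hx
      have : 1 / u₂ x ≤ 1 / u₁ x :=
        one_div_le_one_div_of_le (hS.pos x hx).1 (hS.fst_lt_snd hχ h0 hx).le
      have : 0 ≤ 3 * (χ - 2) / 2 := by linarith
      exact mul_nonneg this (sub_nonneg.2 ‹_›)

theorem sub_le_snd (hχ : 2 ≤ χ) (h0 : u₁ 0 < u₂ 0) {t : ℝ} (ht : t ∈ Ico 0 T) :
    u₂ 0 - u₁ 0 ≤ u₂ t := by
  have h₀ : (0 : ℝ) ∈ Ico 0 T := ⟨le_rfl, ht.1.trans_lt ht.2⟩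
  have := hS.monotoneOn_snd_sub_fst hχ h0 h₀ ht ht.1
  linarith [(hS.pos t ht).1]

theorem collapseRate_le_of_mem (hχ : 2 ≤ χ) (h0 : u₁ 0 < u₂ 0) {t : ℝ} (ht : t ∈ Ico 0 T) :
    collapseRate χ (u₁ t) (u₂ t) ≤ -(χ - 2) :=
  collapseRate_le hχ (hS.pos t ht).1 (hS.fst_lt_snd hχ h0 ht).le

theorem deriv_fst_sq_le (hχ : 2 ≤ χ) (h0 : u₁ 0 < u₂ 0) {t : ℝ} (ht : t ∈ Ico 0 T) :
    deriv (fun s => u₁ s ^ 2) t ≤ -(χ - 2) := by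
  rw [(hS.hasDerivAt_fst_sq ht).deriv]
  exact hS.collapseRate_le_of_mem hχ h0 ht

theorem antitoneOn_fst (hχ : 2 ≤ χ) (h0 : u₁ 0 < u₂ 0) : AntitoneOn u₁ (Ico 0 T) := by
  have hsq : AntitoneOn (fun s => u₁ s ^ 2) (Ico 0 T) :=
    antitoneOn_of_hasDerivAt_nonpos (convex_Ico 0 T) (fun x hx => hS.hasDerivAt_fst_sq hx)
      fun x hx => (hS.collapseRate_le_of_mem hχ h0 (interior_subset hx)).trans (by linarith)
  intro x hx y hy hxy
  exact (pow_le_pow_iff_left₀ (hS.pos y hy).1.le (hS.pos x hx).1.le two_ne_zero).1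
    (hsq hx hy hxy)

theorem tendsto_fst_nhdsLT_zero (hT : 0 < T) (hχ : 2 ≤ χ) (h0 : u₁ 0 < u₂ 0)
    (hlim : liminf u₁ (𝓝[<] T) = 0) : Tendsto u₁ (𝓝[<] T) (𝓝 0) := by
  rw [← hlim]
  refine AntitoneOn.tendsto_nhdsLT_liminf hT
    ((hS.antitoneOn_fst hχ h0).mono Ioo_subset_Ico_self) ⟨0, ?_⟩
  rintro _ ⟨x, hx, rfl⟩
  exact (hS.pos x (Ioo_subset_Ico_self hx)).1.le

theorem tendsto_collapseRate (hT : 0 < T) (hχ : 2 ≤ χ) (h0 : u₁ 0 < u₂ 0)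
    (hu : Tendsto u₁ (𝓝[<] T) (𝓝 0)) :
    Tendsto (fun t => collapseRate χ (u₁ t) (u₂ t)) (𝓝[<] T) (𝓝 (-2 * (χ - 2))) := by
  have hI : ∀ᶠ t in 𝓝[<] T, t ∈ Ico 0 T :=
    mem_of_superset (Ioo_mem_nhdsLT hT) Ioo_subset_Ico_self
  have hc : 0 < u₂ 0 - u₁ 0 := sub_pos.2 h0
  have hratio : ∀ v : ℝ → ℝ, (∀ t ∈ Ico 0 T, u₂ 0 - u₁ 0 ≤ v t) →
      Tendsto (fun t => u₁ t / v t) (𝓝[<] T) (𝓝 0) := fun v hv => by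
    refine tendsto_of_tendsto_of_tendsto_of_le_of_le' tendsto_const_nhds
      (by simpa using hu.div_const (u₂ 0 - u₁ 0)) (hI.mono fun t ht => ?_)
      (hI.mono fun t ht => ?_)
    · exact div_nonneg (hS.pos t ht).1.le (hc.trans_le (hv t ht)).le
    · exact div_le_div_of_nonneg_left (hS.pos t ht).1.le hc (hv t ht)
  have h₁ := hratio u₂ fun t ht => hS.sub_le_snd hχ h0 ht
  have h₂ := hratio (fun t => u₁ t + u₂ t) fun t ht => by
    linarith [hS.sub_le_snd hχ h0 ht, (hS.pos t ht).1]
  simpa [collapseRate] using (tendsto_const_nhds (x := -2 * (χ - 2))).add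
    (h₁.const_mul (χ - 2)) |>.sub (h₂.const_mul χ)

theorem tendsto_fst_sq_div (hT : 0 < T) (hχ : 2 < χ) (h0 : u₁ 0 < u₂ 0)
    (hu : Tendsto u₁ (𝓝[<] T) (𝓝 0)) :
    Tendsto (fun t => u₁ t ^ 2 / (2 * (χ - 2) * (T - t))) (𝓝[<] T) (𝓝 1) := by
  have hα : 2 * (χ - 2) ≠ 0 := by linarith
  have hdiv := (hS.tendsto_collapseRate hT hχ.le h0 hu).div_const (-(2 * (χ - 2)))
  rw [neg_mul, neg_div_neg_eq, div_self hα] at hdiv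
  refine HasDerivAt.lhopital_zero_left_on_Ioo hT
    (fun x hx => hS.hasDerivAt_fst_sq (Ioo_subset_Ico_self hx))
    (fun x _ => (((hasDerivAt_id x).const_sub T).const_mul (2 * (χ - 2))).congr_deriv
      (by ring)) (fun _ _ => neg_ne_zero.2 hα) (by simpa using hu.pow 2) ?_ hdiv
  have : Continuous fun t : ℝ => 2 * (χ - 2) * (T - t) := by fun_prop
  simpa using (this.tendsto T).mono_left nhdsWithin_le_nhds

end Is3Sol

/-- Three particles, two collapse: for `χ > 2`, `ᾱ = χ - 2`, a maximal
solution with `u₂(0) > u₁(0) > 0` and `liminf_{t→T⁻} u₁ = 0`: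
(i) `u₂ - u₁` is nondecreasing, hence `u₂(t) ≥ u₂(0) - u₁(0)`;
(ii) `d/dt(u₁²) ≤ -ᾱ` and `u₁(t) → 0` as `t → T⁻`;
(iii) `u₁(t)²/(2ᾱ(T-t)) → 1`, i.e. the rescaled `v₁ → 1`, while
`v₂ = u₂/√(2ᾱ(T-t)) ≥ (1/(A√(2ᾱT))) e^{ᾱτ(t)}` for some `A > 0`, where
`τ(t) = -(1/ᾱ) log(√(2ᾱ(T-t))/√(2ᾱT))`. -/
theorem stmt19 (χ T : ℝ) (hχ : 2 < χ) (hT : 0 < T)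
    (ab : ℝ) (hab : ab = χ - 2)
    (u₁ u₂ : ℝ → ℝ) (h : Is3MaxSol χ T u₁ u₂)
    (h0 : u₁ 0 < u₂ 0)
    (hbu : Filter.liminf u₁ (nhdsWithin T (Set.Iio T)) = 0) :
    (MonotoneOn (fun t => u₂ t - u₁ t) (Set.Ico (0 : ℝ) T) ∧
        ∀ t ∈ Set.Ico (0 : ℝ) T, u₂ 0 - u₁ 0 ≤ u₂ t) ∧
      ((∀ t ∈ Set.Ico (0 : ℝ) T, deriv (fun s => (u₁ s) ^ 2) t ≤ -ab) ∧
        Filter.Tendsto u₁ (nhdsWithin T (Set.Iio T)) (nhds 0)) ∧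
      Filter.Tendsto (fun t => (u₁ t) ^ 2 / (2 * ab * (T - t)))
        (nhdsWithin T (Set.Iio T)) (nhds 1) ∧
      ∃ A > 0, ∀ t ∈ Set.Ico (0 : ℝ) T,
        (1 / (A * Real.sqrt (2 * ab * T))) *
            Real.exp (ab * (-(1 / ab) *
              Real.log (Real.sqrt (2 * ab * (T - t)) / Real.sqrt (2 * ab * T))))
          ≤ u₂ t / Real.sqrt (2 * ab * (T - t)) := by
  subst hab
  have hS := h.1
  have hu₁ := hS.tendsto_fst_nhdsLT_zero hT hχ.le h0 hbu
  have hc : 0 < u₂ 0 - u₁ 0 := sub_pos.2 h0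
  refine ⟨⟨hS.monotoneOn_snd_sub_fst hχ.le h0, fun t => hS.sub_le_snd hχ.le h0⟩,
    ⟨fun t => hS.deriv_fst_sq_le hχ.le h0, hu₁⟩, hS.tendsto_fst_sq_div hT hχ h0 hu₁,
    1 / (u₂ 0 - u₁ 0), one_div_pos.2 hc, fun t ht => ?_⟩
  have hα : 0 < 2 * (χ - 2) := by linarith
  have hx : 0 < √(2 * (χ - 2) * (T - t)) := Real.sqrt_pos.2 (by nlinarith [ht.2])
  have hy : 0 < √(2 * (χ - 2) * T) := Real.sqrt_pos.2 (by positivity)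
  rw [Real.exp_mul_neg_one_div_mul_log_div (by linarith) hx hy]
  calc 1 / (1 / (u₂ 0 - u₁ 0) * √(2 * (χ - 2) * T)) *
        (√(2 * (χ - 2) * T) / √(2 * (χ - 2) * (T - t)))
      = (u₂ 0 - u₁ 0) / √(2 * (χ - 2) * (T - t)) := by field_simp
    _ ≤ u₂ t / √(2 * (χ - 2) * (T - t)) :=
      div_le_div_of_nonneg_right (hS.sub_le_snd hχ.le h0 ht) hx.le
end
end
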